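/- Assume v_0 < ... < v_g satisfy the Bresinsky conditions, with g ≥ 1. Then for every 1 ≤ i ≤ g and every integer k ≥ 1, the integer v_i − k·v_0 does not belong to Γ. -/
import Mathlib


/-- The Apéry set of `S ⊆ ℕ` (w.r.t. `a₀ = min S`): the minimal element of `S`
in each residue class modulo `a₀` that meets `S`. -/
noncomputable def apery (S : Set ℕ) : Set ℕ :=
  {a | a ∈ S ∧ ∀ b ∈ S, b % sInf S = a % sInf S → a ≤ b}

/-- `S` is covered by its Apéry set: `Ap(S)` has exactly `min S` elements and
`S = ⋃_{a ∈ Ap(S)} (a + ℕ·min S)`. -/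
noncomputable def CoveredByApery (S : Set ℕ) : Prop :=
  (apery S).ncard = sInf S ∧
    S = {x | ∃ a ∈ apery S, ∃ k : ℕ, x = a + k * sInf S}

/-- The sequence `ε_i` computed from `S`:
`ε_0 = min S`, `ε_i = max{gcd(ε_{i-1}, a) : a ∈ Ap(S), ε_{i-1} ∤ a}`. -/
noncomputable def eps (S : Set ℕ) : ℕ → ℕ
  | 0 => sInf S
  | i + 1 => sSup {d | ∃ a ∈ apery S, ¬ eps S i ∣ a ∧ d = Nat.gcd (eps S i) a}

/-- `η_0 = 1`, `η_i = ε_{i-1}/ε_i`. -/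
noncomputable def eta (S : Set ℕ) : ℕ → ℕ
  | 0 => 1
  | i + 1 => eps S i / eps S (i + 1)

/-- The minimal index `ρ` with `ε_ρ = 1`. -/
noncomputable def rho (S : Set ℕ) : ℕ := sInf {i | eps S i = 1}

/-- The set of the `m` smallest elements of `T ⊆ ℕ`. -/
noncomputable def nSmallest (m : ℕ) (T : Set ℕ) : Set ℕ :=
  {a | a ∈ T ∧ (T ∩ Set.Iio a).ncard < m}

/-- The sets `B_i(S)`: `B_0(S) = {min S}`, and for `i ≥ 1`, `B_i(S)` is the set of
the `ε_0/ε_{i-1}` smallest elements of `{a ∈ Ap(S) : ε_i ∣ a, ε_{i-1} ∤ a}`. -/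
noncomputable def Bset (S : Set ℕ) : ℕ → Set ℕ
  | 0 => {sInf S}
  | i + 1 => nSmallest (eps S 0 / eps S i)
      {a | a ∈ apery S ∧ eps S (i + 1) ∣ a ∧ ¬ eps S i ∣ a}

/-- `e_i = gcd(v_0, …, v_i)`. -/
def eseq (v : ℕ → ℕ) : ℕ → ℕ
  | 0 => v 0
  | i + 1 => Nat.gcd (eseq v i) (v (i + 1))

/-- `n_0 = 1`, `n_i = e_{i-1}/e_i`. -/
def nseq (v : ℕ → ℕ) : ℕ → ℕ
  | 0 => 1
  | i + 1 => eseq v i / eseq v (i + 1)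

/-- The numerical semigroup generated by `v_0, …, v_g`. -/
def semigroupGen (g : ℕ) (v : ℕ → ℕ) : Set ℕ :=
  {x | ∃ c : ℕ → ℕ, x = ∑ i ∈ Finset.range (g + 1), c i * v i}

lemma eseq_pos (v : ℕ → ℕ) (hpos : 0 < v 0) : ∀ i, 0 < eseq v i := by
  intro i
  induction i with
  | zero => exact hpos
  | succ n ih => exact Nat.gcd_pos_of_pos_left _ ih

lemma eseq_dvd (v : ℕ → ℕ) : ∀ i j, j ≤ i → eseq v i ∣ v j := by
  intro i
  induction i with
  | zero => intro j hj; interval_cases j; exact dvd_refl _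
  | succ n ih =>
    intro j hj
    rcases Nat.lt_succ_iff_lt_or_eq.mp (Nat.lt_succ_of_le hj) with h | h
    · exact (Nat.gcd_dvd_left _ _).trans (ih j (by omega))
    · subst h; exact Nat.gcd_dvd_right _ _

/-- For `v_0 < ⋯ < v_g` positive with `gcd = 1` satisfying the Bresinsky
conditions and `g ≥ 1`: for every `1 ≤ i ≤ g` and `k ≥ 1`, the integer
`v_i − k·v_0` does not belong to `Γ`. -/
theorem vi_sub_kv0_not_in_gamma (g : ℕ) (v : ℕ → ℕ) (hg : 1 ≤ g)
    (hpos : 0 < v 0)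
    (hmono : ∀ i j, i < j → j ≤ g → v i < v j) (hgcd : eseq v g = 1)
    (hbre : ∀ i, 1 ≤ i → i ≤ g → 2 ≤ nseq v i ∧ nseq v (i - 1) * v (i - 1) < v i) :
    ∀ i, 1 ≤ i → i ≤ g → ∀ k : ℕ, 1 ≤ k → ∀ m ∈ semigroupGen g v,
      (m : ℤ) ≠ (v i : ℤ) - (k : ℤ) * (v 0 : ℤ) := by
  intro i hi1 hig k hk m hm heq
  obtain ⟨c, hc⟩ := hm
  obtain ⟨i', rfl⟩ : ∃ i', i = i' + 1 := ⟨i - 1, by omega⟩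
  have hkv : ((k * v 0 : ℕ) : ℤ) = (k : ℤ) * (v 0 : ℤ) := by push_cast; ring
  rw [← hkv] at heq
  have hkv1 : 1 ≤ k * v 0 := Nat.mul_pos (by omega) hpos
  have hnat : m + k * v 0 = v (i' + 1) := by omega
  have hmlt : m < v (i' + 1) := by omega
  have hzero : ∀ j, i' + 1 ≤ j → j ≤ g → c j * v j = 0 := by
    intro j hj1 hj2
    by_contra h
    have hcj : 1 ≤ c j := by
      rcases Nat.eq_zero_or_pos (c j) with h0 | h0
      · simp [h0] at h
      · exact h0
    have hvle : v (i' + 1) ≤ v j := by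
      rcases eq_or_lt_of_le hj1 with h' | h'
      · rw [h']
      · exact le_of_lt (hmono _ _ h' hj2)
    have hle : c j * v j ≤ m := by
      rw [hc]
      exact Finset.single_le_sum (f := fun j => c j * v j)
        (fun _ _ => Nat.zero_le _) (Finset.mem_range.mpr (by omega))
    nlinarith
  have hdvdm : eseq v i' ∣ m := by
    rw [hc]
    apply Finset.dvd_sum
    intro j hj
    rcases le_or_gt j i' with h | h
    · exact Dvd.dvd.mul_left (eseq_dvd v i' j h) _
    · rw [hzero j (by omega) (by have := Finset.mem_range.mp hj; omega)]
      exact dvd_zero _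
  have hdvdvi : eseq v i' ∣ v (i' + 1) := by
    have h0 : eseq v i' ∣ k * v 0 := Dvd.dvd.mul_left (eseq_dvd v i' 0 (Nat.zero_le _)) k
    rw [← hnat]; exact Nat.dvd_add hdvdm h0
  have hgcd_eq : eseq v (i' + 1) = eseq v i' := by
    show Nat.gcd (eseq v i') (v (i' + 1)) = eseq v i'
    exact Nat.gcd_eq_left hdvdvi
  have hn : nseq v (i' + 1) = 1 := by
    show eseq v i' / eseq v (i' + 1) = 1
    rw [hgcd_eq]
    exact Nat.div_self (eseq_pos v hpos i')
  have h2 := (hbre (i' + 1) hi1 hig).1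
  omega
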